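/- arXiv:1907.03686 — 2 statements merged into one kernel-verified Lean document; each statement's English description precedes it below -/
import Mathlib

section
/- Let C be a triangulated category with a weight structure w and a t-structure t (homological convention). Then w is left adjacent to t (meaning C_{w≤0} ⊥ C_{t≥1} and C_{w≥0} ⊥ C_{t≤-1}) if and only if C_{w≥0} = C_{t≥0}. -/
open CategoryTheory Category Limits Pretriangulated ZeroObject Opposite

universe v u u₂ v₂

variable (C : Type u) [Category.{v} C] [Preadditive C] [HasZeroObject C]
  [HasShift C ℤ] [∀ n : ℤ, (CategoryTheory.shiftFunctor C n).Additive] [Pretriangulated C]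

/-- `X` is a retract (direct summand) of `Y`. -/
def IsRetract {C : Type u} [Category.{v} C] (X Y : C) : Prop :=
  ∃ (s : X ⟶ Y) (r : Y ⟶ X), s ≫ r = 𝟙 X

/-- A weight structure on a pretriangulated category `C`, in the homological convention:
`le` is the class `C_{w≤0}` and `ge` is the class `C_{w≥0}`. -/
structure WeightStructure where
  le : Set C
  ge : Set C
  le_retract : ∀ ⦃X Y : C⦄, IsRetract X Y → Y ∈ le → X ∈ le
  ge_retract : ∀ ⦃X Y : C⦄, IsRetract X Y → Y ∈ ge → X ∈ ge
  le_shift : ∀ X : C, X ∈ le → X⟦(-1 : ℤ)⟧ ∈ le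
  ge_shift : ∀ X : C, X ∈ ge → X⟦(1 : ℤ)⟧ ∈ ge
  orth : ∀ ⦃X Y : C⦄, X ∈ le → Y ∈ ge → ∀ f : X ⟶ Y⟦(1 : ℤ)⟧, f = 0
  decomp : ∀ M : C, ∃ (L R : C) (f : L ⟶ M) (g : M ⟶ R) (h : R ⟶ L⟦(1 : ℤ)⟧),
    Triangle.mk f g h ∈ (distTriang C) ∧ L ∈ le ∧ R⟦(-1 : ℤ)⟧ ∈ ge

/-- A t-structure on a pretriangulated category `C`, in the homological convention:
`le` is the class `C_{t≤0}` and `ge` is the class `C_{t≥0}`. -/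
structure HomTStructure where
  le : Set C
  ge : Set C
  le_iso : ∀ ⦃X Y : C⦄, (X ≅ Y) → Y ∈ le → X ∈ le
  ge_iso : ∀ ⦃X Y : C⦄, (X ≅ Y) → Y ∈ ge → X ∈ ge
  le_shift : ∀ X : C, X ∈ le → X⟦(-1 : ℤ)⟧ ∈ le
  ge_shift : ∀ X : C, X ∈ ge → X⟦(1 : ℤ)⟧ ∈ ge
  orth : ∀ ⦃X Y : C⦄, X⟦(-1 : ℤ)⟧ ∈ ge → Y ∈ le → ∀ f : X ⟶ Y, f = 0
  decomp : ∀ M : C, ∃ (L R : C) (f : L ⟶ M) (g : M ⟶ R) (h : R ⟶ L⟦(1 : ℤ)⟧),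
    Triangle.mk f g h ∈ (distTriang C) ∧ L ∈ ge ∧ R⟦(1 : ℤ)⟧ ∈ le

/-- A contravariant additive functor is cohomological if it sends distinguished
triangles to exact sequences. -/
def IsCohomological {A : Type u₂} [Category.{v₂} A] [Abelian A]
    (H : Cᵒᵖ ⥤ A) [H.Additive] : Prop :=
  ∀ (T : Triangle C), ∀ hT : T ∈ distTriang C,
    (ShortComplex.mk (H.map T.mor₂.op) (H.map T.mor₁.op) (by
      rw [← H.map_comp, ← op_comp, comp_distTriang_mor_zero₁₂ _ hT, op_zero, H.map_zero])).Exact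

/-!
Both classes `C_{w≥0}` and `C_{t≥0}` are left orthogonals: `M ∈ C_{t≥0}` iff `M ⊥ C_{t≤-1}`
(if `M → R` in the truncation triangle `L → M → R → L[1]` vanishes, then `𝟙 R` factors through
`L[1] → R`, which vanishes, so `R = 0`), and
`N[-1] ∈ C_{w≥0}` iff `C_{w≤0} ⊥ N` (if `L → N` in a weight decomposition vanishes then `N`
is a retract of `R`). The two adjacency conditions are exactly the inclusions
`C_{t≥0} ⊆ C_{w≥0}` and `C_{w≥0} ⊆ C_{t≥0}` rewritten through these descriptions.
-/

namespace HomTStructure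

variable {C} (t : HomTStructure C)

theorem hom_eq_zero_of_mem_ge {X Y : C} (hX : X ∈ t.ge) (hY : Y⟦(1 : ℤ)⟧ ∈ t.le)
    (f : X ⟶ Y) : f = 0 :=
  (shiftFunctor C (1 : ℤ)).map_injective <| by
    rw [t.orth (t.ge_iso (shiftShiftNeg X (1 : ℤ)) hX) hY (f⟦(1 : ℤ)⟧'), Functor.map_zero]

theorem mem_ge_of_hom_eq_zero {M : C}
    (hM : ∀ Y : C, Y⟦(1 : ℤ)⟧ ∈ t.le → ∀ f : M ⟶ Y, f = 0) : M ∈ t.ge := by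
  obtain ⟨L, R, f, g, h, hT, hL, hR⟩ := t.decomp M
  obtain ⟨k, hk⟩ : ∃ k : L⟦(1 : ℤ)⟧ ⟶ R, 𝟙 R = h ≫ k :=
    Triangle.yoneda_exact₃ _ hT (𝟙 R) ((comp_id g).trans (hM R hR g))
  have hRle : R ∈ t.le := t.le_iso (shiftShiftNeg R (1 : ℤ)).symm (t.le_shift _ hR)
  have hRzero : IsZero R := by
    rw [IsZero.iff_id_eq_zero, hk,
      t.orth (t.ge_iso (shiftShiftNeg L (1 : ℤ)) hL) hRle k, comp_zero]
  have : IsIso f := (Triangle.isZero₃_iff_isIso₁ _ hT).1 hRzero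
  exact t.ge_iso (asIso f).symm hL

end HomTStructure

namespace WeightStructure

variable {C} (w : WeightStructure C)

theorem ge_iso {X Y : C} (e : X ≅ Y) (hY : Y ∈ w.ge) : X ∈ w.ge :=
  w.ge_retract ⟨e.hom, e.inv, e.hom_inv_id⟩ hY

theorem hom_eq_zero_of_mem_le {X Y : C} (hX : X ∈ w.le) (hY : Y⟦(-1 : ℤ)⟧ ∈ w.ge)
    (f : X ⟶ Y) : f = 0 := by
  have e := shiftNegShift Y (1 : ℤ)
  rw [← comp_id f, ← e.inv_hom_id, ← assoc, w.orth hX hY (f ≫ e.inv), zero_comp]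

theorem shift_mem_ge_of_hom_eq_zero {N : C} (hN : ∀ X ∈ w.le, ∀ f : X ⟶ N, f = 0) :
    N⟦(-1 : ℤ)⟧ ∈ w.ge := by
  obtain ⟨L, R, f, g, h, hT, hL, hR⟩ := w.decomp N
  obtain ⟨r, hr⟩ : ∃ r : R ⟶ N, 𝟙 N = g ≫ r :=
    Triangle.yoneda_exact₂ _ hT (𝟙 N) ((comp_id f).trans (hN L hL f))
  refine w.ge_retract ⟨g⟦(-1 : ℤ)⟧', r⟦(-1 : ℤ)⟧', ?_⟩ hR
  rw [← Functor.map_comp, ← hr, CategoryTheory.Functor.map_id]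

end WeightStructure

/-- w is left adjacent to t if and only if C_{w≥0} = C_{t≥0}. -/
theorem left_adjacent_iff_ge_eq (w : WeightStructure C) (t : HomTStructure C) :
    ((∀ X ∈ w.le, ∀ Y : C, Y⟦(-1 : ℤ)⟧ ∈ t.ge → ∀ f : X ⟶ Y, f = 0) ∧
     (∀ X ∈ w.ge, ∀ Y : C, Y⟦(1 : ℤ)⟧ ∈ t.le → ∀ f : X ⟶ Y, f = 0)) ↔
    w.ge = t.ge := by
  constructor
  · rintro ⟨hle, hge⟩
    refine Set.Subset.antisymm (fun M hM => t.mem_ge_of_hom_eq_zero (hge M hM)) fun M hM => ?_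
    refine w.ge_iso (shiftShiftNeg M (1 : ℤ)).symm (w.shift_mem_ge_of_hom_eq_zero ?_)
    exact fun X hX => hle X hX _ (t.ge_iso (shiftShiftNeg M (1 : ℤ)) hM)
  · intro h
    exact ⟨fun X hX Y hY => w.hom_eq_zero_of_mem_le hX (h ▸ hY),
      fun X hX Y hY => t.hom_eq_zero_of_mem_ge (h ▸ hX) hY⟩
end

section
/- Let w be a weight structure on a triangulated category C and t a t-structure on a triangulated category C' ⊇ C such that t is right orthogonal to w in C' (Hom(C_{w≤0}, C'_{t≥1}) = 0 and Hom(C_{w≥0}, C'_{t≤-1}) = 0) and the heart of t is contained in the objects of C. Then for every object M of the heart of t there exists P ∈ C_{w=0} and a morphism P → M inducing an epimorphism H^t_0(P) → M in the heart of t; consequently the heart of t has enough projectives. -/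
open CategoryTheory Category Limits Pretriangulated ZeroObject Opposite

universe v u u₂ v₂

variable (C : Type u) [Category.{v} C] [Preadditive C] [HasZeroObject C]
  [HasShift C ℤ] [∀ n : ℤ, (CategoryTheory.shiftFunctor C n).Additive] [Pretriangulated C]

universe u₃

variable {C' : Type u₃} [Category.{v} C'] [Preadditive C'] [HasZeroObject C']
  [HasShift C' ℤ] [∀ n : ℤ, (CategoryTheory.shiftFunctor C' n).Additive] [Pretriangulated C']

/-!
Write `M ≅ i M₀` and take a weight decomposition `A → M₀ → B` with `A ∈ C_{w≤0}` and
`B ∈ C_{w≥1}`. Orthogonality puts `i B` in `t_{≥1}`, so `i A` is an extension of objects of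
`t_{≥0}`; hence `Hom(C_{w≤0}, A⟦1⟧) = 0`, which forces `A ∈ C_{w≥0}`, and `P = A` lies in the
heart `C_{w=0}`. The truncation triangle `L → i P → R` with `L ∈ t_{≥1}` and `R ∈ t_{≤0}` makes
`R = H^t_0(i P)`, and `i P → M` factors through `R`; it is an epimorphism on the heart because
its cone `i B` lies in `t_{≥1}`. Finally, the cone of an epimorphism of the heart lies in
`t_{≥1}`, which has no maps from `i P` since `P ∈ C_{w≤0}`: so `Hom(i P, -)` lifts along
epimorphisms of the heart, and `Hom(R, -) = Hom(i P, -)` on the heart transports this to `R`.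
-/

namespace CategoryTheory.Pretriangulated

variable {D : Type*} [Category D] [Preadditive D] [HasZeroObject D] [HasShift D ℤ]
  [∀ n : ℤ, (CategoryTheory.shiftFunctor D n).Additive] [Pretriangulated D]

lemma Triangle.isIso_mor₁_of_mor₂_eq_zero (T : Triangle D) (hT : T ∈ distTriang D)
    (h₂ : T.mor₂ = 0) (h : ∀ p : T.obj₁⟦(1 : ℤ)⟧ ⟶ T.obj₃, p = 0) : IsIso T.mor₁ := by
  obtain ⟨p, hp⟩ := T.yoneda_exact₃ hT (𝟙 T.obj₃) (by rw [h₂, zero_comp])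
  refine (T.isZero₃_iff_isIso₁ hT).1 ((IsZero.iff_id_eq_zero _).2 ?_)
  rw [hp, h p, comp_zero]

lemma Triangle.isIso_mor₂_of_mor₁_eq_zero (T : Triangle D) (hT : T ∈ distTriang D)
    (h₁ : T.mor₁ = 0) (h : ∀ s : T.obj₁⟦(1 : ℤ)⟧ ⟶ T.obj₃, s = 0) : IsIso T.mor₂ := by
  obtain ⟨s, hs⟩ := T.coyoneda_exact₁ hT (𝟙 _) (by rw [h₁, Functor.map_zero, comp_zero])
  refine (T.rotate.isZero₃_iff_isIso₁ (rot_of_distTriang T hT)).1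
    ((IsZero.iff_id_eq_zero _).2 (hs.trans (by rw [h s, zero_comp]; rfl)))

lemma Triangle.mk_comp_iso_distinguished (T : Triangle D) (hT : T ∈ distTriang D)
    {X : D} (e : T.obj₂ ≅ X) :
    Triangle.mk (T.mor₁ ≫ e.hom) (e.inv ≫ T.mor₂) T.mor₃ ∈ distTriang D :=
  isomorphic_distinguished _ hT _ <| Triangle.isoMk _ _ (Iso.refl _) e.symm (Iso.refl _)
    ((assoc _ _ _).trans ((T.mor₁ ≫= e.hom_inv_id).trans ((comp_id _).trans (id_comp _).symm)))
    (comp_id _)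
    ((T.mor₃ ≫= Functor.map_id _ _).trans ((comp_id _).trans (id_comp _).symm))

end CategoryTheory.Pretriangulated

namespace HomTStructure

variable (t : HomTStructure C')

def geOne : ObjectProperty C' := fun X => X⟦(-1 : ℤ)⟧ ∈ t.ge

def leNegOne : ObjectProperty C' := fun X => X⟦(1 : ℤ)⟧ ∈ t.le

variable {t}

lemma ge_of_geOne {X : C'} (hX : t.geOne X) : X ∈ t.ge :=
  t.ge_iso (shiftNegShift X (1 : ℤ)).symm (t.ge_shift _ hX)

lemma le_of_leNegOne {X : C'} (hX : t.leNegOne X) : X ∈ t.le :=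
  t.le_iso (shiftShiftNeg X (1 : ℤ)).symm (t.le_shift _ hX)

lemma geOne_shift_one {X : C'} (hX : X ∈ t.ge) : t.geOne (X⟦(1 : ℤ)⟧) :=
  t.ge_iso (shiftShiftNeg X (1 : ℤ)) hX

lemma hom_eq_zero_of_ge_of_leNegOne {X Y : C'} (hX : X ∈ t.ge) (hY : t.leNegOne Y)
    (f : X ⟶ Y) : f = 0 :=
  (Functor.map_eq_zero_iff (shiftFunctor C' (1 : ℤ))).1 (t.orth (geOne_shift_one hX) hY _)

variable (t)

lemma exists_triangle_geOne_le (X : C') :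
    ∃ (L R : C') (a : L ⟶ X) (b : X ⟶ R) (c : R ⟶ L⟦(1 : ℤ)⟧),
      Triangle.mk a b c ∈ distTriang C' ∧ t.geOne L ∧ R ∈ t.le := by
  obtain ⟨L, R, a, b, c, hT, hL, hR⟩ := t.decomp (X⟦(-1 : ℤ)⟧)
  exact ⟨_, _, _, _, _, Triangle.mk_comp_iso_distinguished _
    (Triangle.shift_distinguished _ hT 1) (shiftNegShift X (1 : ℤ)), geOne_shift_one hL, hR⟩

lemma ge_iff_leftOrthogonal (X : C') : X ∈ t.ge ↔ t.leNegOne.leftOrthogonal X := by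
  refine ⟨fun hX Y f hY => hom_eq_zero_of_ge_of_leNegOne hX hY f, fun hX => ?_⟩
  obtain ⟨L, R, a, b, c, hT, hL, hR⟩ := t.decomp X
  have : IsIso a := Triangle.isIso_mor₁_of_mor₂_eq_zero _ hT (hX b hR)
    (t.orth (geOne_shift_one hL) (le_of_leNegOne hR))
  exact t.ge_iso (asIso a).symm hL

lemma le_iff_rightOrthogonal (Y : C') : Y ∈ t.le ↔ t.geOne.rightOrthogonal Y := by
  refine ⟨fun hY X f hX => t.orth hX hY f, fun hY => ?_⟩
  obtain ⟨L, R, a, b, c, hT, hL, hR⟩ := t.exists_triangle_geOne_le Y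
  have : IsIso b := Triangle.isIso_mor₂_of_mor₁_eq_zero _ hT (hY a hL)
    (t.orth (geOne_shift_one (ge_of_geOne hL)) hR)
  exact t.le_iso (asIso b) hR

lemma geOne_iff_leftOrthogonal (X : C') :
    t.geOne X ↔ ObjectProperty.leftOrthogonal (· ∈ t.le) X := by
  refine ⟨fun hX Y f hY => t.orth hX hY f, fun hX => ?_⟩
  refine (t.ge_iff_leftOrthogonal _).2 fun Y f hY => ?_
  have := hX ((shiftNegShift X (1 : ℤ)).inv ≫ f⟦(1 : ℤ)⟧') hY
  rw [← Functor.map_eq_zero_iff (shiftFunctor C' (1 : ℤ)),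
    ← cancel_epi (shiftNegShift X (1 : ℤ)).inv, this, comp_zero]

lemma mem_ge_of_distTriang (T : Triangle C') (hT : T ∈ distTriang C')
    (h₁ : T.obj₁ ∈ t.ge) (h₃ : T.obj₃ ∈ t.ge) : T.obj₂ ∈ t.ge := by
  simp only [ge_iff_leftOrthogonal] at h₁ h₃ ⊢
  exact ObjectProperty.ext_of_isTriangulatedClosed₂ _ T hT h₁ h₃

lemma mem_le_of_distTriang (T : Triangle C') (hT : T ∈ distTriang C')
    (h₁ : T.obj₁ ∈ t.le) (h₃ : T.obj₃ ∈ t.le) : T.obj₂ ∈ t.le := by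
  simp only [le_iff_rightOrthogonal] at h₁ h₃ ⊢
  exact ObjectProperty.ext_of_isTriangulatedClosed₂ _ T hT h₁ h₃

/-- For a morphism of the heart `t.le ∩ t.ge`, this says it is an epimorphism of the heart. -/
def IsHeartEpi {X Y : C'} (p : X ⟶ Y) : Prop :=
  ∀ T : C', T ∈ t.le → T ∈ t.ge → ∀ u : Y ⟶ T, p ≫ u = 0 → u = 0

def IsHeartProjective (P : C') : Prop :=
  ∀ X Y : C', X ∈ t.le → X ∈ t.ge → Y ∈ t.le → Y ∈ t.ge →
    ∀ p : X ⟶ Y, t.IsHeartEpi p → ∀ v : P ⟶ Y, ∃ l : P ⟶ X, l ≫ p = v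

variable {t}

lemma isHeartEpi_of_epi {X Y : C'} (p : X ⟶ Y) [Epi p] : t.IsHeartEpi p :=
  fun _ _ _ _ hu => (cancel_epi p).1 (hu.trans comp_zero.symm)

lemma IsHeartEpi.comp {X Y Z : C'} {p : X ⟶ Y} {p' : Y ⟶ Z} (hp : t.IsHeartEpi p)
    (hp' : t.IsHeartEpi p') : t.IsHeartEpi (p ≫ p') :=
  fun T hT₁ hT₂ u hu => hp' T hT₁ hT₂ u (hp T hT₁ hT₂ _ (by rw [← assoc, hu]))

lemma IsHeartEpi.of_comp {X Y Z : C'} {p : X ⟶ Y} {p' : Y ⟶ Z} (h : t.IsHeartEpi (p ≫ p')) :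
    t.IsHeartEpi p' :=
  fun T hT₁ hT₂ u hu => h T hT₁ hT₂ u (by rw [assoc, hu, comp_zero])

lemma isHeartEpi_mor₁_of_geOne (T : Triangle C') (hT : T ∈ distTriang C')
    (h₃ : t.geOne T.obj₃) : t.IsHeartEpi T.mor₁ := by
  intro V hV _ u hu
  obtain ⟨v, rfl⟩ := T.yoneda_exact₂ hT u hu
  rw [t.orth h₃ hV v, comp_zero]

lemma geOne_obj₃_of_isHeartEpi (T : Triangle C') (hT : T ∈ distTriang C')
    (h₁ : T.obj₁ ∈ t.ge) (h₂ : T.obj₂ ∈ t.ge) (hp : t.IsHeartEpi T.mor₁) :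
    t.geOne T.obj₃ := by
  -- `H^t_0(T.obj₃) = 0`: maps from `T.obj₃` to the heart vanish on `T.mor₂` since `T.mor₁` is a
  -- heart epimorphism, and a map to `V ∈ t_{≤0}` factors through the heart object `τ_{≥0} V`.
  have h₃ : T.obj₃ ∈ t.ge :=
    t.mem_ge_of_distTriang _ (rot_of_distTriang _ hT) h₂ (t.ge_shift _ h₁)
  have heart_hom : ∀ V, V ∈ t.le → V ∈ t.ge → ∀ χ : T.obj₃ ⟶ V, χ = 0 := by
    intro V hV₁ hV₂ χ
    have : T.mor₂ ≫ χ = 0 :=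
      hp V hV₁ hV₂ _ (by rw [← assoc, comp_distTriang_mor_zero₁₂ _ hT, zero_comp])
    obtain ⟨g, rfl⟩ := T.rotate.yoneda_exact₂ (rot_of_distTriang _ hT) χ this
    rw [t.orth (geOne_shift_one h₁) hV₁ g]; exact comp_zero
  refine (t.geOne_iff_leftOrthogonal _).2 fun V χ hV => ?_
  obtain ⟨V₁, V₂, α, β, γ, hV', hV₁, hV₂⟩ := t.decomp V
  have hV₁le : V₁ ∈ t.le := t.mem_le_of_distTriang _ (inv_rot_of_distTriang _ hV')
    (t.le_shift _ (le_of_leNegOne hV₂)) hV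
  obtain ⟨κ, rfl⟩ := Triangle.coyoneda_exact₂ _ hV' χ (hom_eq_zero_of_ge_of_leNegOne h₃ hV₂ _)
  rw [heart_hom V₁ hV₁le hV₁ κ]; exact zero_comp

lemma isHeartProjective_of_leftOrthogonal {P : C'} (hP : t.geOne.leftOrthogonal P) :
    t.IsHeartProjective P := by
  intro X Y _ hX _ hY p hp v
  obtain ⟨Z, p', δ, hT⟩ := distinguished_cocone_triangle p
  have hZ : t.geOne Z := geOne_obj₃_of_isHeartEpi _ hT hX hY hp
  obtain ⟨l, hl⟩ := Triangle.coyoneda_exact₂ _ hT v (hP _ hZ)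
  exact ⟨l, hl.symm⟩

lemma IsHeartProjective.of_distTriang (T : Triangle C') (hT : T ∈ distTriang C')
    (h₂ : t.IsHeartProjective T.obj₂) (h₁ : t.geOne T.obj₁) : t.IsHeartProjective T.obj₃ := by
  intro X Y hX hX' hY hY' p hp v
  obtain ⟨l₀, hl₀⟩ := h₂ X Y hX hX' hY hY' p hp (T.mor₂ ≫ v)
  obtain ⟨l, rfl⟩ := T.yoneda_exact₂ hT l₀ (t.orth h₁ hX _)
  refine ⟨l, sub_eq_zero.1 ?_⟩
  obtain ⟨g, hg⟩ := T.yoneda_exact₃ hT (l ≫ p - v)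
    (by rw [Preadditive.comp_sub, ← assoc, hl₀, sub_self])
  rw [hg, t.orth (geOne_shift_one (ge_of_geOne h₁)) hY g, comp_zero]

end HomTStructure

namespace WeightStructure

variable {C}

lemma ge_of_forall_hom_shift_eq_zero (w : WeightStructure C) {A : C}
    (h : ∀ L ∈ w.le, ∀ f : L ⟶ A⟦(1 : ℤ)⟧, f = 0) : A ∈ w.ge := by
  obtain ⟨L, R, f, g, m, hT, hL, hR⟩ := w.decomp (A⟦(1 : ℤ)⟧)
  obtain ⟨r, hr⟩ := Triangle.yoneda_exact₂ _ hT (𝟙 _) (by rw [h L hL f]; exact zero_comp)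
  let ρ : Retract A (R⟦(-1 : ℤ)⟧) :=
    (shiftShiftNeg A (1 : ℤ)).symm.retract.trans
      (Retract.map ⟨g, r, hr.symm⟩ (shiftFunctor C (-1 : ℤ)))
  exact w.ge_retract ⟨ρ.i, ρ.r, ρ.retract⟩ hR

lemma mem_ge_of_map_mem_ge (i : C ⥤ C') [i.PreservesZeroMorphisms] [i.Faithful]
    [i.CommShift ℤ] (w : WeightStructure C) (t : HomTStructure C')
    (h₁ : ∀ X ∈ w.le, ∀ N : C', t.geOne N → ∀ f : i.obj X ⟶ N, f = 0)
    {A : C} (hA : i.obj A ∈ t.ge) : A ∈ w.ge := by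
  refine w.ge_of_forall_hom_shift_eq_zero fun L hL f => (Functor.map_eq_zero_iff i).1 ?_
  refine h₁ L hL _ (t.ge_iso ?_ hA) _
  exact (shiftFunctor C' (-1 : ℤ)).mapIso ((i.commShiftIso (1 : ℤ)).app A) ≪≫
    shiftShiftNeg _ (1 : ℤ)

end WeightStructure

open HomTStructure in
theorem heart_has_enough_projectives
    (i : C ⥤ C') [i.Faithful] [i.CommShift ℤ] [i.IsTriangulated]
    (w : WeightStructure C) (t : HomTStructure C')
    (h₁ : ∀ X ∈ w.le, ∀ N : C', N⟦(-1 : ℤ)⟧ ∈ t.ge → ∀ f : i.obj X ⟶ N, f = 0)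
    (h₂ : ∀ X ∈ w.ge, ∀ N : C', N⟦(1 : ℤ)⟧ ∈ t.le → ∀ f : i.obj X ⟶ N, f = 0)
    (hheart : ∀ Y : C', Y ∈ t.le → Y ∈ t.ge → ∃ X : C, Nonempty (i.obj X ≅ Y))
    (M : C') (hM : M ∈ t.le ∧ M ∈ t.ge) :
    ∃ P : C, P ∈ w.le ∧ P ∈ w.ge ∧
      ∃ (L R : C') (a : L ⟶ i.obj P) (b : i.obj P ⟶ R) (c : R ⟶ L⟦(1 : ℤ)⟧),
        Triangle.mk a b c ∈ (distTriang C') ∧ L⟦(-1 : ℤ)⟧ ∈ t.ge ∧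
        R ∈ t.le ∧ R ∈ t.ge ∧
        ∃ q : R ⟶ M,
          -- q : H^t_0(i P) ⟶ M is an epimorphism in the heart of t
          (∀ T : C', T ∈ t.le → T ∈ t.ge → ∀ u : M ⟶ T, q ≫ u = 0 → u = 0) ∧
          -- R = H^t_0(i P) is a projective object of the heart of t
          (∀ X Y : C', X ∈ t.le → X ∈ t.ge → Y ∈ t.le → Y ∈ t.ge →
            ∀ ep : X ⟶ Y,
              (∀ T : C', T ∈ t.le → T ∈ t.ge → ∀ u : Y ⟶ T, ep ≫ u = 0 → u = 0) →
              ∀ v : R ⟶ Y, ∃ l : R ⟶ X, l ≫ ep = v) := by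
  obtain ⟨M₀, ⟨e⟩⟩ := hheart M hM.1 hM.2
  obtain ⟨A, B, f, g, m, hw, hA, hB⟩ := w.decomp M₀
  have hiw := i.map_distinguished _ hw
  have hiB : t.geOne (i.obj B) :=
    t.ge_iso ((i.commShiftIso (-1 : ℤ)).app B).symm ((t.ge_iff_leftOrthogonal _).2
      fun N φ hN => h₂ _ hB N hN φ)
  have hiA : i.obj A ∈ t.ge :=
    t.mem_ge_of_distTriang _ (inv_rot_of_distTriang _ hiw) hiB (t.ge_iso e hM.2)
  obtain ⟨L, R, a, b, c, hT, hL, hR⟩ := t.exists_triangle_geOne_le (i.obj A)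
  have hRge : R ∈ t.ge :=
    t.mem_ge_of_distTriang _ (rot_of_distTriang _ hT) hiA (t.ge_shift _ (ge_of_geOne hL))
  obtain ⟨q, hq⟩ := Triangle.yoneda_exact₂ _ hT (i.map f ≫ e.hom) (t.orth hL hM.1 _)
  have hbq : t.IsHeartEpi (b ≫ q) :=
    hq ▸ (isHeartEpi_mor₁_of_geOne _ hiw hiB).comp (isHeartEpi_of_epi e.hom)
  have hiA_proj : t.IsHeartProjective (i.obj A) :=
    isHeartProjective_of_leftOrthogonal fun N φ hN => h₁ A hA N hN φ
  exact ⟨A, hA, w.mem_ge_of_map_mem_ge i t h₁ hiA, L, R, a, b, c, hT, hL, hR, hRge, q,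
    hbq.of_comp, hiA_proj.of_distTriang _ hT hL⟩
end
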